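/- (Isometry of the parallel mapping, eq. (3.10), matrix form.) Let U and A be real Ng×N matrices with UᵀU = I_N, AᵀA = I_N and AᵀU = 0. Let s : {1,…,N} → ℝ and t ∈ ℝ, and let sin(St) and cos(St) denote the N×N diagonal matrices with diagonal entries sin(t·sᵢ) and cos(t·sᵢ) respectively. Define the Ng×Ng matrix T = (−U·sin(St) + A·cos(St))·Aᵀ + (I_{Ng} − A·Aᵀ). Then for every real Ng×N matrix D̃ with D̃ᵀU = 0, one has ‖T·D̃‖_F = ‖D̃‖_F, where ‖·‖_F is the Frobenius norm. -/
import Mathlib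


/-- The Frobenius norm of a real matrix. -/
noncomputable def frobeniusNorm {m n : ℕ} (M : Matrix (Fin m) (Fin n) ℝ) : ℝ :=
  Real.sqrt (∑ i, ∑ j, (M i j) ^ 2)

lemma frobenius_sum_eq {m n : ℕ} (M : Matrix (Fin m) (Fin n) ℝ) :
    ∑ i, ∑ j, (M i j) ^ 2 = ∑ j, (M.transpose * M) j j := by
  rw [Finset.sum_comm]
  simp [Matrix.mul_apply, Matrix.transpose_apply, sq]

/-- Isometry of the parallel mapping (eq. (3.10), matrix form): with `UᵀU = I`,
`AᵀA = I`, `AᵀU = 0`, the parallel transport matrix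
`T = (−U sin(St) + A cos(St)) Aᵀ + (I − A Aᵀ)` preserves the Frobenius norm of every
tangent vector `D̃` (i.e. every `D̃` with `D̃ᵀU = 0`). -/
theorem parallel_mapping_isometry (Ng N : ℕ) (hNNg : N ≤ Ng)
    (U A : Matrix (Fin Ng) (Fin N) ℝ)
    (hU : U.transpose * U = 1) (hA : A.transpose * A = 1)
    (hAU : A.transpose * U = 0)
    (s : Fin N → ℝ) (t : ℝ) :
    ∀ D : Matrix (Fin Ng) (Fin N) ℝ, D.transpose * U = 0 →
      frobeniusNorm
        (((-U * Matrix.diagonal (fun i => Real.sin (t * s i))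
            + A * Matrix.diagonal (fun i => Real.cos (t * s i))) * A.transpose
          + (1 - A * A.transpose)) * D)
        = frobeniusNorm D := by
  intro D hDU
  set S : Matrix (Fin N) (Fin N) ℝ := Matrix.diagonal (fun i => Real.sin (t * s i)) with hS
  set C : Matrix (Fin N) (Fin N) ℝ := Matrix.diagonal (fun i => Real.cos (t * s i)) with hC
  have hSt : S.transpose = S := by simp [hS]
  have hCt : C.transpose = C := by simp [hC]
  have hUA : U.transpose * A = 0 := by
    have := congrArg Matrix.transpose hAU
    simpa [Matrix.transpose_mul] using this
  have hUD : U.transpose * D = 0 := by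
    have := congrArg Matrix.transpose hDU
    simpa [Matrix.transpose_mul] using this
  have hSC : S * S = 1 - C * C := by
    rw [hS, hC, Matrix.diagonal_mul_diagonal, Matrix.diagonal_mul_diagonal]
    ext i j
    rcases eq_or_ne i j with h | h
    · subst h
      simp only [Matrix.diagonal_apply_eq, Matrix.sub_apply, Matrix.one_apply_eq]
      have h := Real.sin_sq_add_cos_sq (t * s i)
      rw [sq, sq] at h
      linarith
    · simp [Matrix.diagonal_apply_ne _ h, Matrix.one_apply_ne h]
  -- contraction lemmas (right-associated forms)
  have hU' : ∀ (X : Matrix (Fin N) (Fin N) ℝ), U.transpose * (U * X) = X := by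
    intro X; rw [← Matrix.mul_assoc, hU, Matrix.one_mul]
  have hA' : ∀ (X : Matrix (Fin N) (Fin N) ℝ), A.transpose * (A * X) = X := by
    intro X; rw [← Matrix.mul_assoc, hA, Matrix.one_mul]
  have hAU' : ∀ (X : Matrix (Fin N) (Fin N) ℝ), A.transpose * (U * X) = 0 := by
    intro X; rw [← Matrix.mul_assoc, hAU, Matrix.zero_mul]
  have hUA' : ∀ (X : Matrix (Fin N) (Fin N) ℝ), U.transpose * (A * X) = 0 := by
    intro X; rw [← Matrix.mul_assoc, hUA, Matrix.zero_mul]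
  have hDU' : ∀ (X : Matrix (Fin N) (Fin N) ℝ), D.transpose * (U * X) = 0 := by
    intro X; rw [← Matrix.mul_assoc, hDU, Matrix.zero_mul]
  have hSS : ∀ (X : Matrix (Fin N) (Fin N) ℝ), S * (S * X) = X - C * (C * X) := by
    intro X
    rw [← Matrix.mul_assoc, hSC, Matrix.sub_mul, Matrix.one_mul, Matrix.mul_assoc]
  have key :
      (((-U * S + A * C) * A.transpose + (1 - A * A.transpose)) * D).transpose *
        ((((-U * S + A * C) * A.transpose + (1 - A * A.transpose))) * D)
      = D.transpose * D := by
    simp only [Matrix.transpose_mul, Matrix.transpose_add, Matrix.transpose_sub,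
      Matrix.transpose_one, Matrix.transpose_neg, Matrix.transpose_transpose, hSt, hCt]
    simp only [Matrix.add_mul, Matrix.mul_add, Matrix.sub_mul, Matrix.mul_sub,
      Matrix.neg_mul, Matrix.mul_neg, Matrix.one_mul, Matrix.mul_one,
      Matrix.mul_assoc, hU', hA', hAU', hUA', hDU', hUD, hSS,
      Matrix.mul_zero, Matrix.zero_mul, neg_neg, sub_zero, zero_sub, neg_zero,
      add_zero, zero_add]
    abel
  unfold frobeniusNorm
  rw [frobenius_sum_eq, frobenius_sum_eq D, key]
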